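/- Let Γ be a finite simple graph and suppose the vertices p, q of Γ are not joined by an edge. Let Γ₀, Γ₁, Γ₂ be the full subgraphs of Γ on the complements of {p,q}, {p}, {q} respectively. Then the graph product G_Γ is isomorphic to the amalgamated free product (pushout of groups) G_{Γ₁} *_{G_{Γ₀}} G_{Γ₂}, where the maps G_{Γ₀} → G_{Γ₁} and G_{Γ₀} → G_{Γ₂} are the natural inclusions. -/

import Mathlib

open Monoid

/-- The relator subgroup of the graph product: the normal closure of the commutators
`[of g, of g']` for `g ∈ G p`, `g' ∈ G q` with `{p,q}` an edge of `Γ`. -/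
def graphProductRels {V : Type*} (Γ : SimpleGraph V) (G : V → Type*)
    [∀ v, Group (G v)] : Subgroup (CoprodI G) :=
  Subgroup.normalClosure
    {x : CoprodI G | ∃ (p q : V) (_ : Γ.Adj p q) (g : G p) (g' : G q),
      x = (CoprodI.of g)⁻¹ * (CoprodI.of g')⁻¹ * CoprodI.of g * CoprodI.of g'}

/-- The graph product of the groups `G v` over the graph `Γ`. -/
def GraphProduct {V : Type*} (Γ : SimpleGraph V) (G : V → Type*)
    [∀ v, Group (G v)] : Type _ :=
  CoprodI G ⧸ graphProductRels Γ G

instance {V : Type*} (Γ : SimpleGraph V) (G : V → Type*) [∀ v, Group (G v)] :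
    (graphProductRels Γ G).Normal :=
  Subgroup.normalClosure_normal

instance {V : Type*} (Γ : SimpleGraph V) (G : V → Type*) [∀ v, Group (G v)] :
    Group (GraphProduct Γ G) :=
  QuotientGroup.Quotient.group _

universe u_cond in
instance condGroup {A B : Type u_cond} [Group A] [Group B] : ∀ b : Bool, Group (cond b A B)
  | true => ‹Group A›
  | false => ‹Group B›

/-!
Suppose every vertex and every edge of `Γ` lies in one of the full subgraphs on `s` and `t`.
Then the defining relations of `G_Γ` are exactly those of `G_s` and of `G_t`, while the pushout
over `G_{s ∩ t}` identifies the two copies of each generator from `s ∩ t`. Hence sending a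
generator `g ∈ G v` to its copy in `G_s` or in `G_t` defines a homomorphism
`G_Γ → G_s *_{G_{s ∩ t}} G_t`, inverse to the one induced by the restrictions `G_s, G_t → G_Γ`.
For non-adjacent `p ≠ q` take `s = V ∖ {p}` and `t = V ∖ {q}`: an edge at `p` avoids `q`.
-/

namespace GraphProduct

variable {V : Type*} {Γ : SimpleGraph V} {G : V → Type*} [∀ v, Group (G v)]

section UniversalProperty

variable {K : Type*} [Group K]

variable (Γ) in
def of (v : V) : G v →* GraphProduct Γ G :=
  (QuotientGroup.mk' _).comp CoprodI.of

theorem of_commute {a b : V} (h : Γ.Adj a b) (g : G a) (g' : G b) :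
    Commute (of Γ a g) (of Γ b g') := by
  show QuotientGroup.mk (CoprodI.of g * CoprodI.of g') =
    QuotientGroup.mk (CoprodI.of g' * CoprodI.of g)
  exact QuotientGroup.eq.mpr (Subgroup.subset_normalClosure ⟨b, a, h.symm, g', g, by group⟩)

def lift (ι : ∀ v, G v →* K)
    (hι : ∀ a b, Γ.Adj a b → ∀ (g : G a) (g' : G b), Commute (ι a g) (ι b g')) :
    GraphProduct Γ G →* K :=
  QuotientGroup.lift _ (CoprodI.lift ι) <| Subgroup.normalClosure_le_normal <| by
    rintro _ ⟨a, b, hab, g, g', rfl⟩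
    simp only [SetLike.mem_coe, MonoidHom.mem_ker, map_mul, map_inv, CoprodI.lift_of,
      (hι a b hab g g').inv_inv.eq]
    group

@[simp]
theorem lift_of (ι : ∀ v, G v →* K)
    (hι : ∀ a b, Γ.Adj a b → ∀ (g : G a) (g' : G b), Commute (ι a g) (ι b g'))
    (v : V) (g : G v) : lift ι hι (of Γ v g) = ι v g :=
  CoprodI.lift_of ι g

@[ext]
theorem hom_ext {f f' : GraphProduct Γ G →* K}
    (h : ∀ v, f.comp (of Γ v) = f'.comp (of Γ v)) : f = f' :=
  QuotientGroup.monoidHom_ext _ (CoprodI.ext_hom _ _ h)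

end UniversalProperty

section FullSubgraphs

variable (Γ G) in
def restrict (s : Set V) : GraphProduct (Γ.induce s) (fun v : s => G v) →* GraphProduct Γ G :=
  lift (fun v => of Γ v.1) fun _ _ h => of_commute h

@[simp]
theorem restrict_of (s : Set V) (v : s) (g : G v) :
    restrict Γ G s (of _ v g) = of Γ v g := by
  simp [restrict]

variable (Γ G) in
def inclusion {u s : Set V} (h : u ⊆ s) :
    GraphProduct (Γ.induce u) (fun v : u => G v) →*
      GraphProduct (Γ.induce s) (fun v : s => G v) :=
  lift (fun v => of (Γ.induce s) (G := fun v : s => G v) ⟨v, h v.2⟩)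
    fun a b hab => of_commute (Γ := Γ.induce s) (G := fun v : s => G v)
      (a := ⟨a, h a.2⟩) (b := ⟨b, h b.2⟩) hab

@[simp]
theorem inclusion_of {u s : Set V} (h : u ⊆ s) (v : u) (g : G v) :
    inclusion Γ G h (of _ v g) = of (Γ.induce s) (G := fun v : s => G v) ⟨v, h v.2⟩ g := by
  simp [inclusion]

theorem restrict_comp_inclusion {u s : Set V} (h : u ⊆ s) :
    (restrict Γ G s).comp (inclusion Γ G h) = restrict Γ G u := by
  ext v g
  simp

theorem eq_inclusion {u s : Set V} (h : u ⊆ s)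
    (f : GraphProduct (Γ.induce u) (fun v : u => G v) →*
      GraphProduct (Γ.induce s) (fun v : s => G v))
    (hf : ∀ (v : u) (g : G v),
      f (of _ v g) = of (Γ.induce s) (G := fun v : s => G v) ⟨v, h v.2⟩ g) :
    f = inclusion Γ G h := by
  ext v g
  simp [hf]

end FullSubgraphs

section Pushout

variable {s t u : Set V} (hu : u = s ∩ t) (hcover : ∀ v, v ∈ s ∨ v ∈ t)

variable (Γ G) in
abbrev inclusions : ∀ b : Bool,
    GraphProduct (Γ.induce u) (fun v : u => G v) →*
      cond b (GraphProduct (Γ.induce s) (fun v : s => G v))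
        (GraphProduct (Γ.induce t) (fun v : t => G v)) :=
  fun b => match b with
    | true => inclusion Γ G (hu.trans_subset Set.inter_subset_left)
    | false => inclusion Γ G (hu.trans_subset Set.inter_subset_right)

def ofPushout : PushoutI (inclusions Γ G hu) →* GraphProduct Γ G :=
  PushoutI.lift (fun b => match b with | true => restrict Γ G s | false => restrict Γ G t)
    (restrict Γ G u) fun b => by cases b <;> exact restrict_comp_inclusion _

theorem pushoutI_of_true_of_eq_of_false_of {v : V} (hs : v ∈ s) (ht : v ∈ t) (g : G v) :
    PushoutI.of (φ := inclusions Γ G hu) true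
        (of (Γ.induce s) (G := fun v : s => G v) ⟨v, hs⟩ g) =
      PushoutI.of false (of (Γ.induce t) (G := fun v : t => G v) ⟨v, ht⟩ g) := by
  have hv : v ∈ u := hu ▸ ⟨hs, ht⟩
  have h₁ := PushoutI.of_apply_eq_base (inclusions Γ G hu) true (of _ ⟨v, hv⟩ g)
  have h₂ := PushoutI.of_apply_eq_base (inclusions Γ G hu) false (of _ ⟨v, hv⟩ g)
  simp only [inclusions] at h₁ h₂
  rw [inclusion_of] at h₁ h₂
  exact h₁.trans h₂.symm

variable (Γ) in
open scoped Classical in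
noncomputable def toPushoutVertex (v : V) : G v →* PushoutI (inclusions Γ G hu) :=
  if hs : v ∈ s then (PushoutI.of true).comp (of (Γ.induce s) (G := fun v : s => G v) ⟨v, hs⟩)
  else (PushoutI.of false).comp
    (of (Γ.induce t) (G := fun v : t => G v) ⟨v, (hcover v).resolve_left hs⟩)

theorem toPushoutVertex_of_mem_left {v : V} (hs : v ∈ s) (g : G v) :
    toPushoutVertex Γ hu hcover v g =
      PushoutI.of true (of (Γ.induce s) (G := fun v : s => G v) ⟨v, hs⟩ g) := by
  simp [toPushoutVertex, hs]

theorem toPushoutVertex_of_mem_right {v : V} (ht : v ∈ t) (g : G v) :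
    toPushoutVertex Γ hu hcover v g =
      PushoutI.of false (of (Γ.induce t) (G := fun v : t => G v) ⟨v, ht⟩ g) := by
  by_cases hs : v ∈ s
  · rw [toPushoutVertex_of_mem_left hu hcover hs, pushoutI_of_true_of_eq_of_false_of hu hs ht]
  · simp [toPushoutVertex, hs]

theorem toPushoutVertex_commute (hedge : ∀ a b, Γ.Adj a b → a ∈ s ∧ b ∈ s ∨ a ∈ t ∧ b ∈ t)
    {a b : V} (hab : Γ.Adj a b) (g : G a) (g' : G b) :
    Commute (toPushoutVertex Γ hu hcover a g) (toPushoutVertex Γ hu hcover b g') := by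
  rcases hedge a b hab with ⟨ha, hb⟩ | ⟨ha, hb⟩
  · rw [toPushoutVertex_of_mem_left hu hcover ha, toPushoutVertex_of_mem_left hu hcover hb]
    exact (of_commute (Γ := Γ.induce s) (G := fun v : s => G v)
      (a := ⟨a, ha⟩) (b := ⟨b, hb⟩) hab g g').map _
  · rw [toPushoutVertex_of_mem_right hu hcover ha, toPushoutVertex_of_mem_right hu hcover hb]
    exact (of_commute (Γ := Γ.induce t) (G := fun v : t => G v)
      (a := ⟨a, ha⟩) (b := ⟨b, hb⟩) hab g g').map _

noncomputable def toPushout (hedge : ∀ a b, Γ.Adj a b → a ∈ s ∧ b ∈ s ∨ a ∈ t ∧ b ∈ t) :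
    GraphProduct Γ G →* PushoutI (inclusions Γ G hu) :=
  lift (toPushoutVertex Γ hu hcover) fun _ _ hab => toPushoutVertex_commute hu hcover hedge hab

noncomputable def pushoutEquiv (hedge : ∀ a b, Γ.Adj a b → a ∈ s ∧ b ∈ s ∨ a ∈ t ∧ b ∈ t) :
    GraphProduct Γ G ≃* PushoutI (inclusions Γ G hu) :=
  (toPushout hu hcover hedge).toMulEquiv (ofPushout hu)
    (by
      ext v g
      rcases hcover v with hs | ht
      · simp [toPushout, toPushoutVertex_of_mem_left hu hcover hs, ofPushout]
      · simp [toPushout, toPushoutVertex_of_mem_right hu hcover ht, ofPushout])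
    (PushoutI.hom_ext_nonempty fun b => by
      cases b
      · refine hom_ext fun v => MonoidHom.ext fun g => ?_
        simp [toPushout, ofPushout, toPushoutVertex_of_mem_right hu hcover v.2]
      · refine hom_ext fun v => MonoidHom.ext fun g => ?_
        simp [toPushout, ofPushout, toPushoutVertex_of_mem_left hu hcover v.2])

end Pushout

end GraphProduct

theorem SimpleGraph.Adj.ne_and_ne_or_ne_and_ne {V : Type*} {Γ : SimpleGraph V} {p q a b : V}
    (hpq : p ≠ q) (hadj : ¬ Γ.Adj p q) (hab : Γ.Adj a b) :
    a ≠ p ∧ b ≠ p ∨ a ≠ q ∧ b ≠ q := by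
  grind [SimpleGraph.Adj.ne, SimpleGraph.adj_symm]

theorem graphProduct_pushout_general {V : Type*} (Γ : SimpleGraph V)
    (G : V → Type*) [∀ v, Group (G v)] (p q : V) (hne : p ≠ q) (hadj : ¬ Γ.Adj p q)
    (f₁ : GraphProduct (Γ.induce {v : V | v ≠ p ∧ v ≠ q})
            (fun v : {v : V | v ≠ p ∧ v ≠ q} => G v) →*
          GraphProduct (Γ.induce {v : V | v ≠ p}) (fun v : {v : V | v ≠ p} => G v))
    (hf₁ : ∀ (v : {v : V | v ≠ p ∧ v ≠ q}) (g : G v),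
      f₁ (QuotientGroup.mk (CoprodI.of (M := fun v : {v : V | v ≠ p ∧ v ≠ q} => G v) g)) =
        QuotientGroup.mk
          (CoprodI.of (M := fun v : {v : V | v ≠ p} => G v) (i := ⟨v.1, v.2.1⟩) g))
    (f₂ : GraphProduct (Γ.induce {v : V | v ≠ p ∧ v ≠ q})
            (fun v : {v : V | v ≠ p ∧ v ≠ q} => G v) →*
          GraphProduct (Γ.induce {v : V | v ≠ q}) (fun v : {v : V | v ≠ q} => G v))
    (hf₂ : ∀ (v : {v : V | v ≠ p ∧ v ≠ q}) (g : G v),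
      f₂ (QuotientGroup.mk (CoprodI.of (M := fun v : {v : V | v ≠ p ∧ v ≠ q} => G v) g)) =
        QuotientGroup.mk
          (CoprodI.of (M := fun v : {v : V | v ≠ q} => G v) (i := ⟨v.1, v.2.2⟩) g)) :
    Nonempty (GraphProduct Γ G ≃*
      Monoid.PushoutI (G := fun b : Bool =>
          cond b (GraphProduct (Γ.induce {v : V | v ≠ p}) (fun v : {v : V | v ≠ p} => G v))
            (GraphProduct (Γ.induce {v : V | v ≠ q}) (fun v : {v : V | v ≠ q} => G v)))
        (fun b : Bool => match b with
          | true => f₁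
          | false => f₂)) := by
  have hu : {v : V | v ≠ p ∧ v ≠ q} = {v | v ≠ p} ∩ {v | v ≠ q} := rfl
  obtain rfl := GraphProduct.eq_inclusion (fun v hv => hv.1) f₁ hf₁
  obtain rfl := GraphProduct.eq_inclusion (fun v hv => hv.2) f₂ hf₂
  have hcover (v : V) : v ≠ p ∨ v ≠ q := not_and_or.mp fun h => hne (h.1.symm.trans h.2)
  exact ⟨GraphProduct.pushoutEquiv hu hcover fun _ _ hab => hab.ne_and_ne_or_ne_and_ne hne hadj⟩

/-- If vertices `p, q` of `Γ` are not adjacent, then the graph product over `Γ` is the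
pushout (amalgamated free product) of the graph products over the full subgraphs on the
complements of `{p}` and `{q}`, amalgamated over the full subgraph on the complement of
`{p,q}`, along the natural inclusion maps. -/
theorem graphProduct_pushout {V : Type*} [Fintype V] (Γ : SimpleGraph V)
    (G : V → Type*) [∀ v, Group (G v)] (p q : V) (hne : p ≠ q) (hadj : ¬ Γ.Adj p q)
    (f₁ : GraphProduct (Γ.induce {v : V | v ≠ p ∧ v ≠ q})
            (fun v : {v : V | v ≠ p ∧ v ≠ q} => G v) →*
          GraphProduct (Γ.induce {v : V | v ≠ p}) (fun v : {v : V | v ≠ p} => G v))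
    (hf₁ : ∀ (v : {v : V | v ≠ p ∧ v ≠ q}) (g : G v),
      f₁ (QuotientGroup.mk (CoprodI.of (M := fun v : {v : V | v ≠ p ∧ v ≠ q} => G v) g)) =
        QuotientGroup.mk
          (CoprodI.of (M := fun v : {v : V | v ≠ p} => G v) (i := ⟨v.1, v.2.1⟩) g))
    (f₂ : GraphProduct (Γ.induce {v : V | v ≠ p ∧ v ≠ q})
            (fun v : {v : V | v ≠ p ∧ v ≠ q} => G v) →*
          GraphProduct (Γ.induce {v : V | v ≠ q}) (fun v : {v : V | v ≠ q} => G v))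
    (hf₂ : ∀ (v : {v : V | v ≠ p ∧ v ≠ q}) (g : G v),
      f₂ (QuotientGroup.mk (CoprodI.of (M := fun v : {v : V | v ≠ p ∧ v ≠ q} => G v) g)) =
        QuotientGroup.mk
          (CoprodI.of (M := fun v : {v : V | v ≠ q} => G v) (i := ⟨v.1, v.2.2⟩) g)) :
    Nonempty (GraphProduct Γ G ≃*
      Monoid.PushoutI (G := fun b : Bool =>
          cond b (GraphProduct (Γ.induce {v : V | v ≠ p}) (fun v : {v : V | v ≠ p} => G v))
            (GraphProduct (Γ.induce {v : V | v ≠ q}) (fun v : {v : V | v ≠ q} => G v)))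
        (fun b : Bool => match b with
          | true => f₁
          | false => f₂)) :=
  graphProduct_pushout_general Γ G p q hne hadj f₁ hf₁ f₂ hf₂
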